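/- Let W be a standard Brownian motion on [0,∞). Then P( inf( argsup_{t ∈ pℤ} (W(t) − |t|/2) ) = 0 ) ≥ (1/4)(1 − e^{−p/2})² for any p > 0, where W is extended to a two-sided Brownian motion on ℝ and the supremum is over the lattice pℤ. -/

import Mathlib

open MeasureTheory ProbabilityTheory Real
open scoped NNReal ENNReal

/-- The standard normal cumulative distribution function `Φ`. -/
noncomputable def stdNormalCDF (z : ℝ) : ℝ :=
  ∫ s in Set.Iic z, (Real.sqrt (2 * Real.pi))⁻¹ * Real.exp (-s ^ 2 / 2)

/-- A (one-sided) standard Brownian motion on `[0,∞)`: continuous paths starting at `0`,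
with independent, stationary Gaussian increments of variance `t − s`. -/
structure IsBrownianMotion {Ω : Type*} [MeasurableSpace Ω]
    (P : Measure Ω) (W : ℝ → Ω → ℝ) : Prop where
  meas : ∀ t, Measurable (W t)
  start : ∀ ω, W 0 ω = 0
  cont : ∀ ω, ContinuousOn (fun t => W t ω) (Set.Ici 0)
  gauss_incr : ∀ s t : ℝ, 0 ≤ s → s ≤ t →
    P.map (fun ω => W t ω - W s ω) = gaussianReal 0 (Real.toNNReal (t - s))
  indep_incr : ∀ (n : ℕ) (t : Fin (n + 1) → ℝ), (∀ i, 0 ≤ t i) → Monotone t →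
    iIndepFun
      (fun i : Fin n => fun ω => W (t i.succ) ω - W (t i.castSucc) ω) P

/-- A two-sided standard Brownian motion on `ℝ`: continuous paths starting at `0`, with
independent, stationary Gaussian increments of variance `t − s`. -/
structure IsTwoSidedBM {Ω : Type*} [MeasurableSpace Ω]
    (P : Measure Ω) (W : ℝ → Ω → ℝ) : Prop where
  meas : ∀ t, Measurable (W t)
  start : ∀ ω, W 0 ω = 0
  cont : ∀ ω, Continuous fun t => W t ω
  gauss_incr : ∀ s t : ℝ, s ≤ t →
    P.map (fun ω => W t ω - W s ω) = gaussianReal 0 (Real.toNNReal (t - s))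
  indep_incr : ∀ (n : ℕ) (t : Fin (n + 1) → ℝ), Monotone t →
    iIndepFun
      (fun i : Fin n => fun ω => W (t i.succ) ω - W (t i.castSucc) ω) P

/-!
On each side of `0`, `k ↦ W(pk) − pk/2` (`k ≥ 0`) is a Gaussian random walk with steps
`N(−p/2, p)`, and the two sides are independent. The right-hand walk stays `< 0` for all `k ≥ 1`
as soon as its first step is `≤ 0` (probability `1/2`) and the walk formed by its remaining steps
never reaches `p/2`. The latter has probability at least `1 − e^{−p/2}` by Doob's maximal
inequality for the mean-one martingale `exp(W(pk) − pk/2)`, and it is independent of the first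
step. The left-hand side is the right-hand side of the time-reversed motion `t ↦ W(−t)`. On the
intersection of the two events, `0` is the unique maximiser over `pℤ`.
-/

open Set

section Gaussian

variable {Ω : Type*} {mΩ : MeasurableSpace Ω} {P : Measure Ω} {v : ℝ≥0} {X : Ω → ℝ}

lemma gaussianReal_Iic_zero (hv : v ≠ 0) : gaussianReal 0 v (Iic 0) = 2⁻¹ := by
  have hsymm : gaussianReal 0 v (Ioi 0) = gaussianReal 0 v (Iio 0) := by
    conv_lhs => rw [← neg_zero, ← gaussianReal_map_neg]
    rw [Measure.map_apply measurable_neg measurableSet_Ioi]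
    congr 1; ext x; simp
  have hatom : gaussianReal 0 v (Iic 0) = gaussianReal 0 v (Iio 0) :=
    measure_congr
      (Iio_ae_eq_Iic' (gaussianReal_absolutelyContinuous 0 hv (measure_singleton 0))).symm
  have htotal : gaussianReal 0 v (Iic 0) + gaussianReal 0 v (Ioi 0) = 1 := by
    rw [← measure_union (Iic_disjoint_Ioi le_rfl) measurableSet_Ioi, Iic_union_Ioi, measure_univ]
  rw [hsymm, ← hatom, ← two_mul] at htotal
  exact ENNReal.eq_inv_of_mul_eq_one_left (by rwa [mul_comm])

lemma integrable_exp_sub_half_var (hX : P.map X = gaussianReal 0 v) (hXm : Measurable X) :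
    Integrable (fun ω => exp (X ω - v / 2)) P := by
  have : Integrable (fun x => exp (1 * x)) (P.map X) := hX ▸ integrable_exp_mul_gaussianReal 1
  simp_rw [exp_sub]
  simpa using (this.comp_measurable hXm).div_const (exp (v / 2))

lemma integral_exp_sub_half_var (hX : P.map X = gaussianReal 0 v) :
    ∫ ω, exp (X ω - v / 2) ∂P = 1 := by
  have := mgf_gaussianReal hX 1
  simp only [mgf, one_mul, zero_add, one_pow, mul_one] at this
  simp_rw [exp_sub, integral_div, this, div_self (exp_pos _).ne']

end Gaussian

section Independence

variable {Ω ι β : Type*} {mΩ : MeasurableSpace Ω} [mβ : MeasurableSpace β] {P : Measure Ω}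
  {f : ι → Ω → β}

lemma measurable_biSup_comap {S : Set ι} {i : ι} (hi : i ∈ S) :
    Measurable[⨆ j ∈ S, mβ.comap (f j)] (f i) :=
  (comap_measurable (f i)).mono (le_biSup (fun j => mβ.comap (f j)) hi) le_rfl

lemma ProbabilityTheory.iIndepFun.measure_inter_eq_mul_of_disjoint (h : iIndepFun f P)
    (hf : ∀ i, Measurable (f i)) {S T : Set ι} (hST : Disjoint S T) {A B : Set Ω}
    (hA : MeasurableSet[⨆ i ∈ S, mβ.comap (f i)] A)
    (hB : MeasurableSet[⨆ i ∈ T, mβ.comap (f i)] B) :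
    P (A ∩ B) = P A * P B :=
  (Indep_iff _ _ P).1 (indep_iSup_of_disjoint (fun i => (hf i).comap_le) h.iIndep hST) A B hA hB

end Independence

lemma measurableSet_forall_lt {Ω : Type*} {m : MeasurableSpace Ω} {X : ℕ → Ω → ℝ}
    (hX : ∀ k, Measurable[m] (X k)) (c : ℕ → ℝ) :
    MeasurableSet[m] {ω | ∀ k, X k ω < c k} := by
  simp only [ofPred_forall]
  exact MeasurableSet.iInter fun k => measurableSet_lt (hX k) measurable_const

section GaussianWalk

variable {Ω : Type*} {mΩ : MeasurableSpace Ω} {P : Measure Ω} {v : ℝ≥0} {Z : ℕ → Ω → ℝ}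

/-- `exp (S_{k+1} − v (k+1)/2)` for the walk `S` of `Z`: shifted by one step so that the factor
`exp (Z (k + 1) − v/2)` leading to time `k + 1` is independent of `Z 0, …, Z k`. -/
noncomputable def expWalk (v : ℝ≥0) (Z : ℕ → Ω → ℝ) (k : ℕ) (ω : Ω) : ℝ :=
  exp (∑ j ∈ Finset.range (k + 1), Z j ω - v * (k + 1) / 2)

lemma expWalk_zero : expWalk v Z 0 = fun ω => exp (Z 0 ω - v / 2) := by
  ext ω
  simp [expWalk]

lemma expWalk_succ (k : ℕ) :
    expWalk v Z (k + 1) = expWalk v Z k * fun ω => exp (Z (k + 1) ω - v / 2) := by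
  ext ω
  rw [Pi.mul_apply, expWalk, expWalk, ← exp_add, Finset.sum_range_succ]
  push_cast
  ring_nf

noncomputable def walkFiltration (hmeas : ∀ i, Measurable (Z i)) : Filtration ℕ mΩ :=
  Filtration.natural Z fun i => (hmeas i).stronglyMeasurable

variable (hmeas : ∀ i, Measurable (Z i))
include hmeas

lemma stronglyAdapted_expWalk : StronglyAdapted (walkFiltration hmeas) (expWalk v Z) := by
  intro k
  have hZ : ∀ j ∈ Finset.range (k + 1), Measurable[walkFiltration hmeas k] (Z j) := fun j hj =>
    ((Filtration.stronglyAdapted_natural _ j).mono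
      ((walkFiltration hmeas).mono (Nat.lt_succ_iff.mp (Finset.mem_range.mp hj)))).measurable
  exact ((Finset.measurable_sum _ hZ).sub_const _).exp.stronglyMeasurable

variable (hind : iIndepFun Z P)
include hind

lemma indep_comap_walkFiltration (k : ℕ) :
    Indep (MeasurableSpace.comap (Z (k + 1)) inferInstance) (walkFiltration hmeas k) P := by
  have := indep_iSup_of_disjoint (fun i => (hmeas i).comap_le) hind.iIndep
    (S := {k + 1}) (T := Iic k) (by simp)
  rwa [iSup_singleton] at this

lemma indepFun_expWalk (k : ℕ) :
    IndepFun (expWalk v Z k) (fun ω => exp (Z (k + 1) ω - v / 2)) P := by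
  rw [IndepFun_iff_Indep]
  refine indep_of_indep_of_le_right
    (indep_of_indep_of_le_left (indep_comap_walkFiltration hmeas hind k).symm ?_) ?_
  · exact (stronglyAdapted_expWalk hmeas k).measurable.comap_le
  · exact ((comap_measurable (Z (k + 1))).sub_const _).exp.comap_le

variable (hlaw : ∀ i, P.map (Z i) = gaussianReal 0 v)
include hlaw

lemma integrable_expWalk_and_integral_eq_one (k : ℕ) :
    Integrable (expWalk v Z k) P ∧ ∫ ω, expWalk v Z k ω ∂P = 1 := by
  induction k with
  | zero =>
    rw [expWalk_zero]
    exact ⟨integrable_exp_sub_half_var (hlaw 0) (hmeas 0), integral_exp_sub_half_var (hlaw 0)⟩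
  | succ k ih =>
    have hE := integrable_exp_sub_half_var (hlaw (k + 1)) (hmeas (k + 1))
    have hindep := indepFun_expWalk hmeas hind (v := v) k
    rw [expWalk_succ]
    refine ⟨hindep.integrable_mul ih.1 hE, ?_⟩
    rw [hindep.integral_mul_eq_mul_integral ih.1.aestronglyMeasurable hE.aestronglyMeasurable,
      ih.2, integral_exp_sub_half_var (hlaw (k + 1)), one_mul]

variable [IsProbabilityMeasure P]

lemma martingale_expWalk : Martingale (expWalk v Z) (walkFiltration hmeas) P := by
  have hint k := (integrable_expWalk_and_integral_eq_one hmeas hind hlaw k).1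
  refine martingale_nat (stronglyAdapted_expWalk hmeas) hint fun k => ?_
  set E : Ω → ℝ := fun ω => exp (Z (k + 1) ω - v / 2)
  have hE : Integrable E P := integrable_exp_sub_half_var (hlaw (k + 1)) (hmeas (k + 1))
  have hprod : Integrable (expWalk v Z k * E) P := by
    rw [← expWalk_succ]; exact hint (k + 1)
  have hpull := condExp_mul_of_stronglyMeasurable_left (m := walkFiltration hmeas k)
    (stronglyAdapted_expWalk hmeas k) hprod hE
  have hconst : P[E | walkFiltration hmeas k] =ᵐ[P] fun _ => P[E] :=
    condExp_indep_eq (hmeas (k + 1)).comap_le ((walkFiltration hmeas).le k)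
      ((comap_measurable (Z (k + 1))).sub_const (v / 2 : ℝ)).exp.stronglyMeasurable
      (indep_comap_walkFiltration hmeas hind k)
  rw [expWalk_succ]
  filter_upwards [hpull, hconst] with ω h1 h2
  rw [h1, Pi.mul_apply, h2, integral_exp_sub_half_var (hlaw (k + 1)), mul_one]

lemma measure_exists_le_sum_ge_le (a : ℝ) (n : ℕ) :
    P {ω | ∃ k ≤ n, a + v * (k + 1) / 2 ≤ ∑ j ∈ Finset.range (k + 1), Z j ω}
      ≤ ENNReal.ofReal (exp (-a)) := by
  set A := {ω | ∃ k ≤ n, a + v * (k + 1) / 2 ≤ ∑ j ∈ Finset.range (k + 1), Z j ω}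
  set ε : ℝ≥0 := (exp a).toNNReal
  have hε : (ε : ℝ) = exp a := Real.coe_toNNReal _ (exp_pos a).le
  have hA : A = {ω | (ε : ℝ) ≤ (Finset.range (n + 1)).sup' Finset.nonempty_range_add_one
      fun k => expWalk v Z k ω} := by
    ext ω
    simp [A, Finset.le_sup'_iff, hε, expWalk, le_sub_iff_add_le]
  have hdoob := maximal_ineq (martingale_expWalk hmeas hind hlaw).submartingale
    (fun k ω => (exp_pos _).le) (ε := ε) n
  rw [← hA] at hdoob
  have hM := integrable_expWalk_and_integral_eq_one hmeas hind hlaw n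
  have hle_one : ENNReal.ofReal (∫ ω in A, expWalk v Z n ω ∂P) ≤ 1 := by
    rw [← ENNReal.ofReal_one, ← hM.2]
    exact ENNReal.ofReal_le_ofReal
      (setIntegral_le_integral hM.1 (ae_of_all _ fun ω => (exp_pos _).le))
  rw [exp_neg, ENNReal.ofReal_inv_of_pos (exp_pos _), ENNReal.le_inv_iff_mul_le, mul_comm]
  exact hdoob.trans hle_one

lemma measure_exists_sum_ge_le (a : ℝ) :
    P {ω | ∃ k, a + v * (k + 1) / 2 ≤ ∑ j ∈ Finset.range (k + 1), Z j ω}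
      ≤ ENNReal.ofReal (exp (-a)) := by
  have hunion : {ω | ∃ k, a + v * (k + 1) / 2 ≤ ∑ j ∈ Finset.range (k + 1), Z j ω} =
      ⋃ n, {ω | ∃ k ≤ n, a + v * (k + 1) / 2 ≤ ∑ j ∈ Finset.range (k + 1), Z j ω} := by
    ext ω
    simp only [mem_ofPred_eq, mem_iUnion]
    exact ⟨fun ⟨k, hk⟩ => ⟨k, k, le_rfl, hk⟩, fun ⟨_, k, _, hk⟩ => ⟨k, hk⟩⟩
  have hmono : Monotone fun n =>
      {ω | ∃ k ≤ n, a + v * (k + 1) / 2 ≤ ∑ j ∈ Finset.range (k + 1), Z j ω} :=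
    fun m n hmn ω ⟨k, hk, h⟩ => ⟨k, hk.trans hmn, h⟩
  rw [hunion, hmono.measure_iUnion]
  exact iSup_le (measure_exists_le_sum_ge_le hmeas hind hlaw a)

lemma measure_forall_sum_lt_ge (hv : v ≠ 0) :
    ENNReal.ofReal ((1 - exp (-v / 2)) / 2) ≤
      P {ω | ∀ k : ℕ, ∑ j ∈ Finset.range (k + 1), Z j ω < v * (k + 1) / 2} := by
  set G₁ := {ω | Z 0 ω ≤ 0}
  set G₂ := {ω | ∀ k : ℕ, ∑ j ∈ Finset.range (k + 1), Z (j + 1) ω < v / 2 + v * (k + 1) / 2}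
  have hsub : G₁ ∩ G₂ ⊆ {ω | ∀ k : ℕ, ∑ j ∈ Finset.range (k + 1), Z j ω < v * (k + 1) / 2} := by
    rintro ω ⟨h₁, h₂⟩ (_ | k)
    · have : (0 : ℝ) < v := NNReal.coe_pos.mpr (pos_iff_ne_zero.mpr hv)
      have : Z 0 ω ≤ 0 := h₁
      simp only [zero_add, Finset.sum_range_one, Nat.cast_zero]
      linarith
    · have := h₂ k
      rw [Finset.sum_range_succ']
      push_cast
      linarith [show Z 0 ω ≤ 0 from h₁]
  have hG₁ : P G₁ = 2⁻¹ := by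
    rw [show G₁ = Z 0 ⁻¹' Iic 0 from rfl, ← Measure.map_apply (hmeas 0) measurableSet_Iic,
      hlaw 0, gaussianReal_Iic_zero hv]
  have hG₂ : ENNReal.ofReal (1 - exp (-v / 2)) ≤ P G₂ := by
    have hcompl : P G₂ᶜ ≤ ENNReal.ofReal (exp (-(v / 2))) := by
      have := measure_exists_sum_ge_le (fun j => hmeas (j + 1))
        (hind.precomp Nat.succ_injective) (fun j => hlaw (j + 1)) (v / 2)
      convert this using 2
      ext ω
      simp [G₂]
    rw [prob_compl_eq_one_sub (measurableSet_forall_lt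
      (fun k => Finset.measurable_sum _ fun j _ => hmeas (j + 1)) _)] at hcompl
    rw [neg_div, ENNReal.ofReal_sub _ (exp_pos _).le, ENNReal.ofReal_one]
    exact tsub_le_iff_tsub_le.mp hcompl
  have hindep : P (G₁ ∩ G₂) = P G₁ * P G₂ :=
    hind.measure_inter_eq_mul_of_disjoint hmeas (S := {0}) (T := Ioi 0) (by simp)
      (by rw [iSup_singleton]; exact ⟨Iic 0, measurableSet_Iic, rfl⟩)
      (measurableSet_forall_lt (fun k => Finset.measurable_sum _ fun j _ =>
        measurable_biSup_comap (Nat.succ_pos j)) _)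
  calc ENNReal.ofReal ((1 - exp (-v / 2)) / 2)
      = 2⁻¹ * ENNReal.ofReal (1 - exp (-v / 2)) := by
        rw [div_eq_inv_mul, ENNReal.ofReal_mul (by norm_num), ENNReal.ofReal_inv_of_pos two_pos,
          ENNReal.ofReal_ofNat]
    _ ≤ P G₁ * P G₂ := by rw [hG₁]; gcongr
    _ = P (G₁ ∩ G₂) := hindep.symm
    _ ≤ _ := measure_mono hsub

end GaussianWalk

section Lattice

variable {Ω : Type*} {mΩ : MeasurableSpace Ω} {P : Measure Ω} {W : ℝ → Ω → ℝ}

noncomputable def latticeIncrement (W : ℝ → Ω → ℝ) (q : ℝ) (i : ℤ) (ω : Ω) : ℝ :=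
  W (q * (i + 1)) ω - W (q * i) ω

lemma sum_range_latticeIncrement (q : ℝ) (k : ℕ) (ω : Ω) :
    ∑ j ∈ Finset.range k, latticeIncrement W q j ω = W (q * k) ω - W 0 ω := by
  simpa [latticeIncrement] using Finset.sum_range_sub (fun j : ℕ => W (q * j) ω) k

lemma latticeIncrement_neg (q : ℝ) (i : ℤ) (ω : Ω) :
    latticeIncrement W (-q) i ω = -latticeIncrement W q (-1 - i) ω := by
  simp only [latticeIncrement, Int.cast_sub, Int.cast_neg, Int.cast_one, neg_sub]
  ring_nf

namespace IsTwoSidedBM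

lemma measurable_latticeIncrement (hBM : IsTwoSidedBM P W) (q : ℝ) (i : ℤ) :
    Measurable (latticeIncrement W q i) :=
  (hBM.meas _).sub (hBM.meas _)

lemma sum_range_latticeIncrement_eq (hBM : IsTwoSidedBM P W) (q : ℝ) (k : ℕ) (ω : Ω) :
    ∑ j ∈ Finset.range k, latticeIncrement W q j ω = W (q * k) ω := by
  rw [sum_range_latticeIncrement, hBM.start, sub_zero]

lemma comp_neg (hBM : IsTwoSidedBM P W) : IsTwoSidedBM P (fun t => W (-t)) where
  meas t := hBM.meas (-t)
  start ω := by simpa using hBM.start ω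
  cont ω := (hBM.cont ω).comp continuous_neg
  gauss_incr s t hst := by
    have h := hBM.gauss_incr (-t) (-s) (neg_le_neg hst)
    rw [neg_sub_neg] at h
    have hflip : (fun ω => W (-t) ω - W (-s) ω) = (fun x => -x) ∘ fun ω => W (-s) ω - W (-t) ω := by
      ext ω; simp
    rw [hflip, ← Measure.map_map (f := fun ω => W (-s) ω - W (-t) ω) measurable_neg
      ((hBM.meas _).sub (hBM.meas _)), h,
      gaussianReal_map_neg, neg_zero]
  indep_incr n t ht := by
    -- the increments along `t` are, in reverse order, the negatives of those along `-t ∘ rev`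
    have hrev : Monotone fun i => -t (Fin.rev i) := fun i j hij =>
      neg_le_neg (ht (Fin.rev_le_rev.mpr hij))
    have := ((hBM.indep_incr n _ hrev).precomp Fin.rev_injective).comp (fun _ x => -x)
      (fun _ => measurable_neg)
    convert this using 2 with i
    ext ω
    simp [Fin.rev_succ, Fin.rev_castSucc]

lemma map_latticeIncrement (hBM : IsTwoSidedBM P W) {q : ℝ} (hq : 0 ≤ q) (i : ℤ) :
    P.map (latticeIncrement W q i) = gaussianReal 0 q.toNNReal := by
  have h := hBM.gauss_incr (q * i) (q * (i + 1)) (by nlinarith)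
  rwa [show q * (i + 1) - q * i = q by ring] at h

lemma iIndepFun_latticeIncrement (hBM : IsTwoSidedBM P W) {q : ℝ} (hq : 0 ≤ q) :
    iIndepFun (latticeIncrement W q) P := by
  rw [iIndepFun_iff_finset]
  intro s
  -- `s` lies in a window `[-n, n)`, whose increments are those along the times `q (j - n)`
  set n := s.sup Int.natAbs + 1
  have hn : ∀ i ∈ s, -(n : ℤ) ≤ i ∧ i < n := fun i hi => by
    have := Finset.le_sup (f := Int.natAbs) hi
    omega
  have ht : Monotone fun j : Fin (2 * n + 1) => q * ((j : ℕ) - (n : ℝ)) := fun i j hij => by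
    have : ((i : ℕ) : ℝ) ≤ (j : ℕ) := by exact_mod_cast hij
    exact mul_le_mul_of_nonneg_left (by linarith) hq
  let g : s → Fin (2 * n) := fun i => ⟨(i + n : ℤ).toNat, by have := hn i i.2; omega⟩
  have hg : ∀ i : s, ((g i : ℕ) : ℝ) = i + n := fun i => by
    have := hn i i.2
    exact_mod_cast (show (((g i : ℕ) : ℤ)) = i + n by simp [g]; omega)
  have hg_inj : g.Injective := fun i j hij => Subtype.ext (by
    have := congrArg (fun k : Fin (2 * n) => ((k : ℕ) : ℝ)) hij
    simp only [hg] at this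
    exact_mod_cast add_right_cancel this)
  convert (hBM.indep_incr (2 * n) _ ht).precomp hg_inj using 2 with i
  ext ω
  simp only [Finset.restrict, latticeIncrement, Fin.val_succ,
    Fin.val_castSucc, Nat.cast_add, Nat.cast_one, hg]
  ring_nf

lemma measure_forall_lt_ge [IsProbabilityMeasure P] (hBM : IsTwoSidedBM P W) {p : ℝ}
    (hp : 0 < p) :
    ENNReal.ofReal ((1 - exp (-p / 2)) / 2) ≤
      P {ω | ∀ k : ℕ, W (p * (k + 1)) ω < p * (k + 1) / 2} := by
  have hv : (p.toNNReal : ℝ) = p := Real.coe_toNNReal p hp.le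
  have := measure_forall_sum_lt_ge (Z := fun j : ℕ => latticeIncrement W p j)
    (fun j => hBM.measurable_latticeIncrement p j)
    ((hBM.iIndepFun_latticeIncrement hp.le).precomp Nat.cast_injective)
    (fun j => hBM.map_latticeIncrement hp.le j) (Real.toNNReal_pos.mpr hp).ne'
  simp only [hv, hBM.sum_range_latticeIncrement_eq] at this
  simpa using this

lemma measure_inter_future_past [IsProbabilityMeasure P] (hBM : IsTwoSidedBM P W) {p : ℝ}
    (hp : 0 ≤ p) (c c' : ℕ → ℝ) :
    P ({ω | ∀ k : ℕ, W (p * (k + 1)) ω < c k} ∩ {ω | ∀ k : ℕ, W (-(p * (k + 1))) ω < c' k}) =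
      P {ω | ∀ k : ℕ, W (p * (k + 1)) ω < c k} * P {ω | ∀ k : ℕ, W (-(p * (k + 1))) ω < c' k} := by
  refine (hBM.iIndepFun_latticeIncrement hp).measure_inter_eq_mul_of_disjoint
    (hBM.measurable_latticeIncrement p) (S := {i | 0 ≤ i}) (T := {i | i < 0})
    (Set.disjoint_left.mpr fun i (hi : 0 ≤ i) (hi' : i < 0) => (not_lt.mpr hi) hi') ?_ ?_
  · refine measurableSet_forall_lt (fun k => ?_) c
    have hW : W (p * (k + 1)) = fun ω => ∑ j ∈ Finset.range (k + 1), latticeIncrement W p j ω := by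
      ext ω; rw [hBM.sum_range_latticeIncrement_eq]; push_cast; rfl
    rw [hW]
    exact Finset.measurable_sum _ fun j _ => measurable_biSup_comap (Int.natCast_nonneg j)
  · refine measurableSet_forall_lt (fun k => ?_) c'
    have hW : W (-(p * (k + 1))) =
        fun ω => ∑ j ∈ Finset.range (k + 1), -latticeIncrement W p (-1 - j) ω := by
      ext ω; simp_rw [← latticeIncrement_neg, hBM.sum_range_latticeIncrement_eq]; push_cast; ring_nf
    rw [hW]
    refine Finset.measurable_sum _ fun j _ => Measurable.neg ?_
    exact measurable_biSup_comap (f := latticeIncrement W p) (S := {i | i < 0})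
      (show -1 - (j : ℤ) < 0 by omega)

end IsTwoSidedBM

end Lattice

lemma sInf_lattice_argmax_eq_zero {g : ℝ → ℝ} {p : ℝ} (h : ∀ k : ℤ, k ≠ 0 → g (p * k) < g 0) :
    sInf {t : ℝ | (∃ k : ℤ, t = p * k) ∧ ∀ s : ℤ, g (p * s) ≤ g t} = 0 := by
  suffices {t : ℝ | (∃ k : ℤ, t = p * k) ∧ ∀ s : ℤ, g (p * s) ≤ g t} = {0} by
    rw [this, csInf_singleton]
  refine eq_singleton_iff_unique_mem.mpr ⟨⟨⟨0, by simp⟩, fun s => ?_⟩, ?_⟩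
  · rcases eq_or_ne s 0 with rfl | hs
    · simp
    · exact (h s hs).le
  · rintro t ⟨⟨k, rfl⟩, hmax⟩
    by_contra hk
    have := hmax 0
    simp only [Int.cast_zero, mul_zero] at this
    exact (h k (by rintro rfl; simp at hk)).not_ge this

lemma sub_abs_half_lt_zero_of_forall_lt {f : ℝ → ℝ} {p : ℝ} (hp : 0 < p)
    (hpos : ∀ n : ℕ, f (p * (n + 1)) < p * (n + 1) / 2)
    (hneg : ∀ n : ℕ, f (-(p * (n + 1))) < p * (n + 1) / 2) {k : ℤ} (hk : k ≠ 0) :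
    f (p * k) - |p * k| / 2 < 0 := by
  have hnonneg (n : ℕ) : 0 ≤ p * ((n : ℝ) + 1) := by positivity
  rcases k with (_ | n) | n
  · exact absurd rfl hk
  · have := hpos n
    simp only [Int.ofNat_eq_natCast]
    push_cast
    rw [abs_of_nonneg (hnonneg n)]
    linarith
  · have := hneg n
    simp only [Int.cast_negSucc, Nat.cast_add_one, mul_neg, abs_neg, abs_of_nonneg (hnonneg n)]
    linarith

/-- For a two-sided standard Brownian motion `W` and `p > 0`, the probability that the
smallest maximizer over the lattice `pℤ` of `t ↦ W(t) − |t|/2` is `0` is at least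
`¼(1 − e^{−p/2})²`. -/
theorem prob_argsup_lattice_zero {Ω : Type*} [MeasurableSpace Ω]
    (P : Measure Ω) [IsProbabilityMeasure P]
    (W : ℝ → Ω → ℝ) (hBM : IsTwoSidedBM P W) (p : ℝ) (hp : 0 < p) :
    ENNReal.ofReal ((1 / 4) * (1 - Real.exp (-p / 2)) ^ 2) ≤
      P {ω | sInf {t : ℝ | (∃ k : ℤ, t = p * k) ∧
          ∀ s : ℤ, W (p * s) ω - |p * s| / 2 ≤ W t ω - |t| / 2} = 0} := by
  set Epos := {ω | ∀ k : ℕ, W (p * (k + 1)) ω < p * (k + 1) / 2}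
  set Eneg := {ω | ∀ k : ℕ, W (-(p * (k + 1))) ω < p * (k + 1) / 2}
  have hsub : Epos ∩ Eneg ⊆ {ω | sInf {t : ℝ | (∃ k : ℤ, t = p * k) ∧
      ∀ s : ℤ, W (p * s) ω - |p * s| / 2 ≤ W t ω - |t| / 2} = 0} := by
    rintro ω ⟨hpos, hneg⟩
    refine sInf_lattice_argmax_eq_zero (g := fun t => W t ω - |t| / 2) fun k hk => ?_
    simpa [hBM.start] using sub_abs_half_lt_zero_of_forall_lt (f := fun t => W t ω) hp hpos hneg hk
  have hc : 0 ≤ (1 - exp (-p / 2)) / 2 := by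
    have : exp (-p / 2) ≤ 1 := exp_le_one_iff.mpr (by linarith)
    linarith
  calc ENNReal.ofReal ((1 / 4) * (1 - Real.exp (-p / 2)) ^ 2)
      = ENNReal.ofReal ((1 - exp (-p / 2)) / 2) * ENNReal.ofReal ((1 - exp (-p / 2)) / 2) := by
        rw [← ENNReal.ofReal_mul hc]; ring_nf
    _ ≤ P Epos * P Eneg :=
        mul_le_mul' (hBM.measure_forall_lt_ge hp) (hBM.comp_neg.measure_forall_lt_ge hp)
    _ = P (Epos ∩ Eneg) := (hBM.measure_inter_future_past hp.le _ _).symm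
    _ ≤ _ := measure_mono hsub
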